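/- arXiv:0811.0851 — 2 statements merged into one kernel-verified Lean document; each statement's English description precedes it below -/
import Mathlib

section
/- On the 6×6 square board, any solution to the problem 'vacate a corner square and play to leave a single peg' requires at least 16 moves: the first move necessarily refills the vacated corner region, so after the first move all 16 Merson regions are nonempty and each still requires a move whose first jump opens it. -/
abbrev Pos := Finset (ℤ × ℤ)

def mid (a c : ℤ × ℤ) : ℤ × ℤ := ((a.1 + c.1) / 2, (a.2 + c.2) / 2)

def steps : Finset (ℤ × ℤ) := {(2, 0), (-2, 0), (0, 2), (0, -2)}

/-- The jump from `a` to `c` (over `mid a c`) is legal on board `Bd` in position `S`. -/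
def LegalJump (Bd S : Pos) (a c : ℤ × ℤ) : Prop :=
  c - a ∈ steps ∧ a ∈ Bd ∧ mid a c ∈ Bd ∧ c ∈ Bd ∧ a ∈ S ∧ mid a c ∈ S ∧ c ∉ S

def doJump (S : Pos) (a c : ℤ × ℤ) : Pos := insert c ((S.erase a).erase (mid a c))

/-- `Plays Bd S js S'`: executing the list of jumps `js` (each legal) from `S` yields `S'`. -/
inductive Plays (Bd : Pos) : Pos → List ((ℤ × ℤ) × (ℤ × ℤ)) → Pos → Prop
  | nil (S : Pos) : Plays Bd S [] S
  | cons {S S' : Pos} {js : List ((ℤ × ℤ) × (ℤ × ℤ))} {a c : ℤ × ℤ} :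
      LegalJump Bd S a c → Plays Bd (doJump S a c) js S' → Plays Bd S ((a, c) :: js) S'

/-- A move: a nonempty chain of jumps by one peg (each jump starts where the previous landed). -/
def IsChainMove (mv : List ((ℤ × ℤ) × (ℤ × ℤ))) : Prop :=
  mv ≠ [] ∧ List.Chain' (fun j1 j2 => j2.1 = j1.2) mv

noncomputable def board6 : Pos := (Finset.Icc (0 : ℤ) 5) ×ˢ (Finset.Icc (0 : ℤ) 5)

/-!
Split each coordinate of the board into the blocks `{0}, {1,2}, {3,4}, {5}`; the 16 products of
blocks are the Merson regions. The middle cell of every jump shares a region with its start or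
its landing cell, so a full region can only be emptied by a jump starting in it, and no peg ever
lands in it. Within one move a later jump starts where the peg has just landed, so only the first
jump of a move can leave a full region: each move opens at most one full region. A full region
never opened would survive to the end, impossible when one peg remains and the last jump lands
outside it. Finally, the first move is a single jump into the vacated corner, after which 15
regions are full, and these need 15 more moves.
-/

abbrev Jump := (ℤ × ℤ) × (ℤ × ℤ)

def band (x : ℤ) : ℕ := if x ≤ 0 then 0 else if x ≤ 2 then 1 else if x ≤ 4 then 2 else 3

def mersonRegion (p : ℤ × ℤ) : ℕ := 4 * band p.1 + band p.2

lemma mersonRegion_lt (p : ℤ × ℤ) : mersonRegion p < 16 := by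
  unfold mersonRegion band
  split_ifs <;> omega

lemma exists_mem_board6_mersonRegion_eq :
    ∀ i ∈ Finset.range 16, ∃ x ∈ board6, mersonRegion x = i := by decide

lemma mersonRegion_eq_zero : ∀ x ∈ board6, mersonRegion x = 0 → x = 0 := by decide

lemma mersonRegion_mid_add : ∀ a ∈ board6, ∀ s ∈ steps, a + s ∈ board6 →
    mersonRegion (mid a (a + s)) = mersonRegion a ∨
      mersonRegion (mid a (a + s)) = mersonRegion (a + s) := by decide

/-- The two cells a jump away from the corner lie in different regions. -/
lemma eq_of_jump_corner_of_mersonRegion_eq : ∀ a ∈ board6, ∀ c ∈ board6,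
    (0, 0) - a ∈ steps → c - (0, 0) ∈ steps →
    mersonRegion a = mersonRegion c → a = c := by decide

lemma Plays.eq_of_nil {Bd S T : Pos} (h : Plays Bd S [] T) : S = T := by
  cases h
  rfl

lemma Plays.of_append {Bd : Pos} {l₁ l₂ : List Jump} {S U : Pos}
    (h : Plays Bd S (l₁ ++ l₂) U) : ∃ T, Plays Bd S l₁ T ∧ Plays Bd T l₂ U := by
  induction l₁ generalizing S with
  | nil => exact ⟨S, Plays.nil S, h⟩
  | cons j l₁ ih =>
    cases h with
    | cons hl hp =>
      obtain ⟨T, h₁, h₂⟩ := ih hp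
      exact ⟨T, Plays.cons hl h₁, h₂⟩

def RegionFull (i : ℕ) (S : Pos) : Prop := ∀ x ∈ board6, mersonRegion x = i → x ∈ S

lemma LegalJump.mersonRegion_mid {S : Pos} {a c : ℤ × ℤ} (h : LegalJump board6 S a c) :
    mersonRegion (mid a c) = mersonRegion a ∨ mersonRegion (mid a c) = mersonRegion c := by
  obtain ⟨hs, ha, -, hc, -⟩ := h
  simpa using mersonRegion_mid_add a ha (c - a) hs (by simpa using hc)

lemma LegalJump.not_legalJump_back {Bd S : Pos} {a c : ℤ × ℤ} (h : LegalJump Bd S a c) :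
    ¬ LegalJump Bd (doJump S a c) c a := by
  rintro ⟨-, -, -, -, -, hm, -⟩
  have hmid : mid c a = mid a c := by simp only [mid, add_comm]
  have hne : mid a c ≠ c := fun e => h.2.2.2.2.2.2 (e ▸ h.2.2.2.2.2.1)
  simp [doJump, hmid, hne] at hm

lemma RegionFull.mersonRegion_ne {i : ℕ} {S : Pos} {a c : ℤ × ℤ} (hf : RegionFull i S)
    (h : LegalJump board6 S a c) : mersonRegion c ≠ i :=
  fun hc => h.2.2.2.2.2.2 (hf c h.2.2.2.1 hc)

lemma RegionFull.doJump {i : ℕ} {S : Pos} {a c : ℤ × ℤ} (hf : RegionFull i S)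
    (h : LegalJump board6 S a c) (ha : mersonRegion a ≠ i) : RegionFull i (doJump S a c) := by
  intro x hx hr
  rcases eq_or_ne x c with rfl | hxc
  · exact Finset.mem_insert_self _ _
  have hxa : x ≠ a := by rintro rfl; exact ha hr
  have hxm : x ≠ mid a c := by
    rintro rfl
    rcases h.mersonRegion_mid with hm | hm
    · exact ha (hm ▸ hr)
    · exact hf.mersonRegion_ne h (hm ▸ hr)
  simp only [_root_.doJump, Finset.mem_insert, Finset.mem_erase]
  exact Or.inr ⟨hxm, hxa, hf x hx hr⟩

lemma RegionFull.plays {i : ℕ} {js : List Jump} {S T : Pos} (hf : RegionFull i S)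
    (hp : Plays board6 S js T) (hjs : ∀ j ∈ js, mersonRegion j.1 ≠ i) : RegionFull i T := by
  induction hp with
  | nil => exact hf
  | cons hl _ ih =>
    exact ih (hf.doJump hl (hjs _ List.mem_cons_self))
      fun j hj => hjs j (List.mem_cons_of_mem _ hj)

lemma RegionFull.mersonRegion_head_eq {i : ℕ} {j₀ : Jump} {tl : List Jump} {S T : Pos}
    (hf : RegionFull i S) (hp : Plays board6 S (j₀ :: tl) T)
    (hc : List.IsChain (fun j₁ j₂ : Jump => j₂.1 = j₁.2) (j₀ :: tl))
    {j : Jump} (hj : j ∈ j₀ :: tl) (hr : mersonRegion j.1 = i) : mersonRegion j₀.1 = i := by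
  induction tl generalizing j₀ S with
  | nil => rwa [List.mem_singleton.1 hj] at hr
  | cons j₁ tl ih =>
    by_contra h₀
    cases hp with
    | cons hl hp' =>
      have hj' : j ∈ j₁ :: tl := (List.mem_cons.1 hj).resolve_left (by rintro rfl; exact h₀ hr)
      have h₁ := ih (hf.doJump hl h₀) hp' hc.tail hj'
      rw [(List.isChain_cons_cons.1 hc).1] at h₁
      exact hf.mersonRegion_ne hl h₁

lemma RegionFull.exists_mem_mersonRegion_ne {i : ℕ} {js : List Jump} {S T : Pos}
    (hf : RegionFull i S) (hp : Plays board6 S js T) (hjs : js ≠ [])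
    (hout : ∀ j ∈ js, mersonRegion j.1 ≠ i) : ∃ c ∈ T, mersonRegion c ≠ i := by
  induction hp with
  | nil => exact absurd rfl hjs
  | @cons S S' js a c hl hp' ih =>
    have hf' := hf.doJump hl (hout _ List.mem_cons_self)
    rcases js with _ | ⟨j, js⟩
    · cases hp'
      exact ⟨c, Finset.mem_insert_self _ _, hf.mersonRegion_ne hl⟩
    · exact ih hf' (List.cons_ne_nil _ _) fun j hj => hout j (List.mem_cons_of_mem _ hj)

lemma RegionFull.exists_mem_mersonRegion_eq {i : ℕ} {js : List Jump} {S : Pos} {w : ℤ × ℤ}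
    (hf : RegionFull i S) (hp : Plays board6 S js {w}) (hS : S.Nontrivial)
    (hi : ∃ x ∈ board6, mersonRegion x = i) : ∃ j ∈ js, mersonRegion j.1 = i := by
  by_contra! hout
  rcases js with _ | ⟨j, js⟩
  · exact hS.ne_singleton hp.eq_of_nil
  obtain ⟨c, hc, hci⟩ := hf.exists_mem_mersonRegion_ne hp (List.cons_ne_nil _ _) hout
  obtain ⟨x, hx, hxi⟩ := hi
  have hxw := Finset.mem_singleton.1 (hf.plays hp hout x hx hxi)
  rw [Finset.mem_singleton.1 hc, ← hxw] at hci
  exact hci hxi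

lemma card_le_length_of_regionFull {moves : List (List Jump)} {S T : Pos} {O : Finset ℕ}
    (hch : ∀ mv ∈ moves, IsChainMove mv) (hp : Plays board6 S moves.flatten T)
    (hf : ∀ i ∈ O, RegionFull i S) (hopen : ∀ i ∈ O, ∃ j ∈ moves.flatten, mersonRegion j.1 = i) :
    O.card ≤ moves.length := by
  induction moves generalizing S O with
  | nil =>
    simp only [List.flatten_nil, List.not_mem_nil, false_and, exists_false] at hopen
    simp [Finset.eq_empty_of_forall_notMem hopen]
  | cons mv rest ih =>
    obtain ⟨hne, hchain⟩ := hch mv List.mem_cons_self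
    obtain ⟨j₀, tl, rfl⟩ := List.exists_cons_of_ne_nil hne
    rw [List.flatten_cons] at hp hopen
    obtain ⟨S', hmv, hrest⟩ := hp.of_append
    have hnot : ∀ i ∈ O.erase (mersonRegion j₀.1), ∀ j ∈ j₀ :: tl, mersonRegion j.1 ≠ i :=
      fun i hi j hj hji => (Finset.ne_of_mem_erase hi).symm <|
        (hf i (Finset.mem_of_mem_erase hi)).mersonRegion_head_eq hmv hchain hj hji
    have hcard := ih (fun m hm => hch m (List.mem_cons_of_mem _ hm)) hrest
      (O := O.erase (mersonRegion j₀.1))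
      (fun i hi => (hf i (Finset.mem_of_mem_erase hi)).plays hmv (hnot i hi))
      fun i hi => by
        obtain ⟨j, hj, hji⟩ := hopen i (Finset.mem_of_mem_erase hi)
        rcases List.mem_append.1 hj with hj | hj
        · exact absurd hji (hnot i hi j hj)
        · exact ⟨j, hj, hji⟩
    have := Finset.pred_card_le_card_erase (s := O) (a := mersonRegion j₀.1)
    simp only [List.length_cons]
    omega

lemma Finset.nontrivial_range_erase {n : ℕ} (hn : 3 ≤ n) (k : ℕ) :
    ((Finset.range n).erase k).Nontrivial := by
  rw [← Finset.one_lt_card_iff_nontrivial]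
  have := Finset.pred_card_le_card_erase (s := Finset.range n) (a := k)
  rw [Finset.card_range] at this
  omega

lemma nontrivial_of_regionFull {O : Finset ℕ} {S : Pos} (hO : O.Nontrivial)
    (hf : ∀ i ∈ O, RegionFull i S) (hne : ∀ i ∈ O, ∃ x ∈ board6, mersonRegion x = i) :
    S.Nontrivial := by
  obtain ⟨i, hi, j, hj, hij⟩ := hO
  obtain ⟨x, hx, rfl⟩ := hne i hi
  obtain ⟨y, hy, rfl⟩ := hne j hj
  exact ⟨x, hf _ hi x hx rfl, y, hf _ hj y hy rfl, fun h => hij (h ▸ rfl)⟩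

lemma regionFull_erase_corner {i : ℕ} (hi : i ≠ 0) : RegionFull i (board6.erase (0, 0)) := by
  intro x hx hxi
  refine Finset.mem_erase.2 ⟨?_, hx⟩
  rintro rfl
  exact hi hxi.symm

lemma regionFull_doJump_corner {a : ℤ × ℤ}
    (h : LegalJump board6 (board6.erase (0, 0)) a (0, 0)) :
    ∀ i ∈ (Finset.range 16).erase (mersonRegion a),
      RegionFull i (doJump (board6.erase (0, 0)) a (0, 0)) := by
  intro i hi
  rcases eq_or_ne i 0 with rfl | hi₀
  · intro x hx hxi
    rw [mersonRegion_eq_zero x hx hxi]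
    exact Finset.mem_insert_self _ _
  · exact (regionFull_erase_corner hi₀).doJump h (Finset.ne_of_mem_erase hi).symm

/-- The peg that refilled the corner could only jump back, since the other cell two steps away
is still occupied. -/
lemma not_legalJump_doJump_corner {a c : ℤ × ℤ}
    (h : LegalJump board6 (board6.erase (0, 0)) a (0, 0)) :
    ¬ LegalJump board6 (doJump (board6.erase (0, 0)) a (0, 0)) (0, 0) c := by
  intro h'
  have hreg : mersonRegion c = mersonRegion a := by
    by_contra hne
    exact (regionFull_doJump_corner h _ (Finset.mem_erase.2 ⟨hne, Finset.mem_range.2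
      (mersonRegion_lt c)⟩)).mersonRegion_ne h' rfl
  obtain rfl := eq_of_jump_corner_of_mersonRegion_eq a h.2.1 c h'.2.2.2.1 h.1 h'.1 hreg.symm
  exact h.not_legalJump_back h'

/-- On the 6×6 board, any solution from a vacancy at the corner (0,0) to a single peg
uses at least 16 moves. -/
theorem sixBySix_corner_sixteen_moves (w : ℤ × ℤ)
    (moves : List (List ((ℤ × ℤ) × (ℤ × ℤ))))
    (hch : ∀ mv ∈ moves, IsChainMove mv)
    (hp : Plays board6 (board6.erase ((0 : ℤ), (0 : ℤ))) moves.flatten {w}) :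
    16 ≤ moves.length := by
  have hregion (k : ℕ) : ∀ i ∈ (Finset.range 16).erase k, ∃ x ∈ board6, mersonRegion x = i :=
    fun i hi => exists_mem_board6_mersonRegion_eq i (Finset.mem_of_mem_erase hi)
  have hS₀ : (board6.erase (0, 0)).Nontrivial :=
    nontrivial_of_regionFull (Finset.nontrivial_range_erase (by norm_num) 0)
      (fun _ hi => regionFull_erase_corner (Finset.ne_of_mem_erase hi)) (hregion 0)
  obtain ⟨mv, rest, rfl⟩ := List.exists_cons_of_ne_nil (l := moves) fun h => by
    subst h
    exact hS₀.ne_singleton hp.eq_of_nil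
  obtain ⟨hne, hchain⟩ := hch mv List.mem_cons_self
  obtain ⟨⟨a, c⟩, tl, rfl⟩ := List.exists_cons_of_ne_nil hne
  rw [List.flatten_cons, List.cons_append] at hp
  cases hp with | cons hl hp =>
  obtain rfl : c = (0, 0) := by simpa [hl.2.2.2.1] using hl.2.2.2.2.2.2
  obtain rfl : tl = [] := by
    rcases tl with _ | ⟨⟨a', c'⟩, tl⟩
    · rfl
    obtain rfl : a' = (0, 0) := (List.isChain_cons_cons.1 hchain).1
    cases hp with | cons hl' _ => exact absurd hl' (not_legalJump_doJump_corner hl)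
  have hS₁ := regionFull_doJump_corner hl
  have h15 := card_le_length_of_regionFull (fun m hm => hch m (List.mem_cons_of_mem _ hm)) hp hS₁
    fun i hi => (hS₁ i hi).exists_mem_mersonRegion_eq hp
      (nontrivial_of_regionFull (Finset.nontrivial_range_erase (by norm_num) _) hS₁ (hregion _))
      (hregion _ i hi)
  rw [Finset.card_erase_of_mem (Finset.mem_range.2 (mersonRegion_lt a)), Finset.card_range] at h15
  simp only [List.length_cons]
  omega
end

section
/- (Solitaire army, distance 5, one dimension of the key inequality) With σ = (√5−1)/2 satisfying σ²+σ=1, weight the lattice points of the closed lower half-plane {(x,y) : y ≤ 0} by w(x,y) = σ^{|x| + 5 − y} relative to the target (0,5). Then Σ_{y ≤ 0} Σ_{x ∈ ℤ} σ^{|x| + 5 + |y|} = σ^5 · (1 + 2σ/(1−σ)) · 1/(1−σ) = 1; hence any finite set of pegs in the half-plane has total weight strictly less than 1 = w(target), so no finite sequence of weight-nonincreasing jumps starting from pegs in the half-plane can place a peg at (0,5). -/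
def orthoDirs : Finset (ℤ × ℤ) := {(1, 0), (-1, 0), (0, 1), (0, -1)}

/-- A single solitaire jump on the whole integer lattice. -/
def IsJump (S S' : Pos) : Prop :=
  ∃ p d : ℤ × ℤ, d ∈ orthoDirs ∧ p ∈ S ∧ p + d ∈ S ∧ p + d + d ∉ S ∧
    S' = insert (p + d + d) ((S.erase p).erase (p + d))

noncomputable def sigma' : ℝ := (Real.sqrt 5 - 1) / 2

/-- Golden-ratio weight of the hole `p` relative to the target `t`. -/
noncomputable def w (t p : ℤ × ℤ) : ℝ :=
  sigma' ^ ((p.1 - t.1).natAbs + (p.2 - t.2).natAbs)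

/-- Total golden-ratio weight of a position. -/
noncomputable def W (t : ℤ × ℤ) (S : Pos) : ℝ := ∑ p ∈ S, w t p

lemma sqrt5 : Real.sqrt 5 ^ 2 = 5 := Real.sq_sqrt (by norm_num)

lemma sigma_pos : 0 < sigma' := by
  have : (1:ℝ) < Real.sqrt 5 := by
    nlinarith [sqrt5, Real.sqrt_nonneg 5]
  unfold sigma'; linarith

lemma sigma_lt_one : sigma' < 1 := by
  have : Real.sqrt 5 < 3 := by nlinarith [sqrt5, Real.sqrt_nonneg 5]
  unfold sigma'; linarith

lemma sigma_eq : sigma' ^ 2 + sigma' = 1 := by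
  unfold sigma'; nlinarith [sqrt5]

lemma w_nonneg (t p : ℤ × ℤ) : 0 ≤ w t p := pow_nonneg sigma_pos.le _

lemma key1d (a : ℤ) :
    sigma' ^ (a + 2).natAbs ≤ sigma' ^ a.natAbs + sigma' ^ (a + 1).natAbs := by
  rcases le_or_gt (-1) a with h | h
  · have h2 : a.natAbs ≤ (a + 2).natAbs := by omega
    have : sigma' ^ (a + 2).natAbs ≤ sigma' ^ a.natAbs :=
      pow_le_pow_of_le_one sigma_pos.le sigma_lt_one.le h2
    have := pow_nonneg sigma_pos.le (a + 1).natAbs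
    linarith
  · have h1 : a.natAbs = (a + 2).natAbs + 2 := by omega
    have h2 : (a + 1).natAbs = (a + 2).natAbs + 1 := by omega
    rw [h1, h2]
    have : sigma' ^ ((a+2).natAbs + 2) + sigma' ^ ((a+2).natAbs + 1)
        = sigma' ^ (a+2).natAbs * (sigma' ^ 2 + sigma') := by ring
    rw [this, sigma_eq, mul_one]

lemma key1d' (a : ℤ) :
    sigma' ^ (a - 2).natAbs ≤ sigma' ^ a.natAbs + sigma' ^ (a - 1).natAbs := by
  have h := key1d (-a)
  have e1 : (-a + 2).natAbs = (a - 2).natAbs := by omega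
  have e2 : (-a).natAbs = a.natAbs := by omega
  have e3 : (-a + 1).natAbs = (a - 1).natAbs := by omega
  rwa [e1, e2, e3] at h

lemma jump_w (t p d : ℤ × ℤ) (hd : d ∈ orthoDirs) :
    w t (p + d + d) ≤ w t p + w t (p + d) := by
  obtain ⟨x, y⟩ := p
  obtain ⟨tx, ty⟩ := t
  have hb := sigma_pos.le
  fin_cases hd <;>
    simp only [w, Prod.mk_add_mk, Prod.fst, Prod.snd] <;>
    rw [pow_add, pow_add, pow_add]
  · have e1 : (x + 1 + 1 - tx) = (x - tx) + 2 := by ring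
    have e2 : (x + 1 - tx) = (x - tx) + 1 := by ring
    have e3 : (y + 0 + 0 - ty) = y - ty := by ring
    have e4 : (y + 0 - ty) = y - ty := by ring
    rw [e1, e2, e3, e4]
    calc sigma' ^ ((x - tx) + 2).natAbs * sigma' ^ (y - ty).natAbs
        ≤ (sigma' ^ (x - tx).natAbs + sigma' ^ ((x - tx) + 1).natAbs) * sigma' ^ (y - ty).natAbs :=
          mul_le_mul_of_nonneg_right (key1d _) (pow_nonneg hb _)
      _ = sigma' ^ (x - tx).natAbs * sigma' ^ (y - ty).natAbs
          + sigma' ^ ((x - tx) + 1).natAbs * sigma' ^ (y - ty).natAbs := by ring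
  · have e1 : (x + -1 + -1 - tx) = (x - tx) - 2 := by ring
    have e2 : (x + -1 - tx) = (x - tx) - 1 := by ring
    have e3 : (y + 0 + 0 - ty) = y - ty := by ring
    have e4 : (y + 0 - ty) = y - ty := by ring
    rw [e1, e2, e3, e4]
    calc sigma' ^ ((x - tx) - 2).natAbs * sigma' ^ (y - ty).natAbs
        ≤ (sigma' ^ (x - tx).natAbs + sigma' ^ ((x - tx) - 1).natAbs) * sigma' ^ (y - ty).natAbs :=
          mul_le_mul_of_nonneg_right (key1d' _) (pow_nonneg hb _)
      _ = sigma' ^ (x - tx).natAbs * sigma' ^ (y - ty).natAbs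
          + sigma' ^ ((x - tx) - 1).natAbs * sigma' ^ (y - ty).natAbs := by ring
  · have e1 : (y + 1 + 1 - ty) = (y - ty) + 2 := by ring
    have e2 : (y + 1 - ty) = (y - ty) + 1 := by ring
    have e3 : (x + 0 + 0 - tx) = x - tx := by ring
    have e4 : (x + 0 - tx) = x - tx := by ring
    rw [e1, e2, e3, e4]
    calc sigma' ^ (x - tx).natAbs * sigma' ^ ((y - ty) + 2).natAbs
        ≤ sigma' ^ (x - tx).natAbs * (sigma' ^ (y - ty).natAbs + sigma' ^ ((y - ty) + 1).natAbs) :=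
          mul_le_mul_of_nonneg_left (key1d _) (pow_nonneg hb _)
      _ = sigma' ^ (x - tx).natAbs * sigma' ^ (y - ty).natAbs
          + sigma' ^ (x - tx).natAbs * sigma' ^ ((y - ty) + 1).natAbs := by ring
  · have e1 : (y + -1 + -1 - ty) = (y - ty) - 2 := by ring
    have e2 : (y + -1 - ty) = (y - ty) - 1 := by ring
    have e3 : (x + 0 + 0 - tx) = x - tx := by ring
    have e4 : (x + 0 - tx) = x - tx := by ring
    rw [e1, e2, e3, e4]
    calc sigma' ^ (x - tx).natAbs * sigma' ^ ((y - ty) - 2).natAbs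
        ≤ sigma' ^ (x - tx).natAbs * (sigma' ^ (y - ty).natAbs + sigma' ^ ((y - ty) - 1).natAbs) :=
          mul_le_mul_of_nonneg_left (key1d' _) (pow_nonneg hb _)
      _ = sigma' ^ (x - tx).natAbs * sigma' ^ (y - ty).natAbs
          + sigma' ^ (x - tx).natAbs * sigma' ^ ((y - ty) - 1).natAbs := by ring

lemma jump_W (t : ℤ × ℤ) {S S' : Pos} (h : IsJump S S') : W t S' ≤ W t S := by
  obtain ⟨p, d, hd, hp, hpd, hout, rfl⟩ := h
  have hdne : d ≠ 0 := by fin_cases hd <;> decide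
  have hne : p + d ≠ p := by
    intro h; apply hdne; have := congrArg (· - p) h; simpa using this
  have hmem : p + d ∈ S.erase p := Finset.mem_erase.mpr ⟨hne, hpd⟩
  have hnotin : p + d + d ∉ (S.erase p).erase (p + d) := fun h =>
    hout (Finset.mem_of_mem_erase (Finset.mem_of_mem_erase h))
  rw [W, Finset.sum_insert hnotin,
    Finset.sum_erase_eq_sub hmem, Finset.sum_erase_eq_sub hp]
  have := jump_w t p d hd
  unfold W
  linarith

section tsum

noncomputable def e5 : ℤ × ℕ ≃ {q : ℤ × ℤ // q.2 ≤ 0} where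
  toFun := fun x => ⟨(x.1, -(x.2 : ℤ)), by simp⟩
  invFun := fun q => ((q : ℤ × ℤ).1, (-(q : ℤ × ℤ).2).toNat)
  left_inv := fun x => by simp
  right_inv := fun q => by
    obtain ⟨⟨x, y⟩, hy⟩ := q
    have hy' : y ≤ 0 := hy
    apply Subtype.ext
    have h : -(((-y).toNat : ℤ)) = y := by omega
    show ((x : ℤ), -(((-y).toNat : ℤ))) = (x, y)
    rw [h]

lemma summable_g : Summable (fun x : ℤ => sigma' ^ x.natAbs) := by
  apply Summable.of_nat_of_neg_add_one (f := fun x : ℤ => sigma' ^ x.natAbs)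
  · simpa using summable_geometric_of_lt_one sigma_pos.le sigma_lt_one
  · have : (fun n : ℕ => sigma' ^ ((-(↑n + 1) : ℤ)).natAbs)
        = fun n : ℕ => sigma' * sigma' ^ n := by
      funext n
      have : ((-(↑n + 1) : ℤ)).natAbs = n + 1 := by omega
      rw [this, pow_succ, mul_comm]
    rw [this]
    exact (summable_geometric_of_lt_one sigma_pos.le sigma_lt_one).mul_left _

lemma summable_hn : Summable (fun n : ℕ => sigma' ^ ((-(↑n + 1) : ℤ)).natAbs) := by
  have e : (fun n : ℕ => sigma' ^ ((-(↑n + 1) : ℤ)).natAbs)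
      = fun n : ℕ => sigma' * sigma' ^ n := by
    funext n
    have : ((-(↑n + 1) : ℤ)).natAbs = n + 1 := by omega
    rw [this, pow_succ, mul_comm]
  rw [e]
  exact (summable_geometric_of_lt_one sigma_pos.le sigma_lt_one).mul_left _

lemma tsum_g : ∑' x : ℤ, sigma' ^ x.natAbs = (1 + sigma') * (1 - sigma')⁻¹ := by
  have hpos : Summable (fun n : ℕ => sigma' ^ ((n : ℤ)).natAbs) := by
    have e : (fun n : ℕ => sigma' ^ ((n : ℤ)).natAbs) = fun n : ℕ => sigma' ^ n := by
      funext n; norm_num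
    rw [e]; exact summable_geometric_of_lt_one sigma_pos.le sigma_lt_one
  rw [tsum_of_nat_of_neg_add_one (f := fun x : ℤ => sigma' ^ x.natAbs) hpos summable_hn]
  have h1 : ∑' n : ℕ, sigma' ^ ((n : ℤ)).natAbs = (1 - sigma')⁻¹ := by
    simp only [Int.natAbs_natCast]
    exact tsum_geometric_of_lt_one sigma_pos.le sigma_lt_one
  have h2 : ∑' n : ℕ, sigma' ^ ((-(↑n + 1) : ℤ)).natAbs = sigma' * (1 - sigma')⁻¹ := by
    have e : (fun n : ℕ => sigma' ^ ((-(↑n + 1) : ℤ)).natAbs)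
        = fun n : ℕ => sigma' * sigma' ^ n := by
      funext n
      have : ((-(↑n + 1) : ℤ)).natAbs = n + 1 := by omega
      rw [this, pow_succ, mul_comm]
    rw [e, tsum_mul_left, tsum_geometric_of_lt_one sigma_pos.le sigma_lt_one]
  rw [h1, h2]; ring

lemma w_e5 (x : ℤ × ℕ) :
    w ((0 : ℤ), (5 : ℤ)) ((e5 x : ℤ × ℤ)) = sigma' ^ x.1.natAbs * (sigma' ^ 5 * sigma' ^ x.2) := by
  obtain ⟨a, n⟩ := x
  simp only [w, e5, Equiv.coe_fn_mk]
  have h1 : ((a, -(n:ℤ)).1 - ((0:ℤ),(5:ℤ)).1) = a := by simp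
  have h2 : ((a, -(n:ℤ)).2 - ((0:ℤ),(5:ℤ)).2).natAbs = 5 + n := by
    simp only []; omega
  rw [h1, h2, pow_add, pow_add]

lemma summable_prod :
    Summable (fun x : ℤ × ℕ => sigma' ^ x.1.natAbs * (sigma' ^ 5 * sigma' ^ x.2)) := by
  exact Summable.mul_of_nonneg (f := fun x : ℤ => sigma' ^ x.natAbs)
    (g := fun n : ℕ => sigma' ^ 5 * sigma' ^ n) summable_g
    ((summable_geometric_of_lt_one sigma_pos.le sigma_lt_one).mul_left _)
    (fun x => pow_nonneg sigma_pos.le _)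
    (fun n => mul_nonneg (pow_nonneg sigma_pos.le _) (pow_nonneg sigma_pos.le _))

lemma summable_w : Summable (fun p : {q : ℤ × ℤ // q.2 ≤ 0} => w ((0 : ℤ), (5 : ℤ)) (p : ℤ × ℤ)) := by
  rw [← Equiv.summable_iff e5]
  have : (fun p : {q : ℤ × ℤ // q.2 ≤ 0} => w ((0 : ℤ), (5 : ℤ)) (p : ℤ × ℤ)) ∘ e5
      = fun x : ℤ × ℕ => sigma' ^ x.1.natAbs * (sigma' ^ 5 * sigma' ^ x.2) := by
    funext x; exact w_e5 x
  rw [this]; exact summable_prod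

lemma tsum_w : (∑' p : {q : ℤ × ℤ // q.2 ≤ 0}, w ((0 : ℤ), (5 : ℤ)) (p : ℤ × ℤ)) = 1 := by
  rw [← e5.tsum_eq]
  rw [tsum_congr w_e5]
  have hf : Summable (fun x : ℤ => ‖sigma' ^ x.natAbs‖) := by
    have e : (fun x : ℤ => ‖sigma' ^ x.natAbs‖) = fun x : ℤ => sigma' ^ x.natAbs := by
      funext x; exact Real.norm_of_nonneg (pow_nonneg sigma_pos.le _)
    rw [e]; exact summable_g
  have hg : Summable (fun n : ℕ => ‖sigma' ^ 5 * sigma' ^ n‖) := by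
    have e : (fun n : ℕ => ‖sigma' ^ 5 * sigma' ^ n‖) = fun n : ℕ => sigma' ^ 5 * sigma' ^ n := by
      funext n
      exact Real.norm_of_nonneg (mul_nonneg (pow_nonneg sigma_pos.le _) (pow_nonneg sigma_pos.le _))
    rw [e]
    exact ((summable_geometric_of_lt_one sigma_pos.le sigma_lt_one).mul_left _)
  rw [← tsum_mul_tsum_of_summable_norm (f := fun x : ℤ => sigma' ^ x.natAbs)
      (g := fun n : ℕ => sigma' ^ 5 * sigma' ^ n) hf hg]
  · rw [tsum_g, tsum_mul_left, tsum_geometric_of_lt_one sigma_pos.le sigma_lt_one]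
    have h2 : sigma' ^ 2 = 1 - sigma' := by have := sigma_eq; linarith
    have hne : (1 : ℝ) - sigma' ≠ 0 := by have := sigma_lt_one; linarith
    have hs := sigma_eq
    field_simp
    linear_combination (sigma' ^ 4 + sigma' ^ 2 - sigma' + 1) * hs

end tsum

lemma finsum_le_one (T : Finset (ℤ × ℤ)) (hT : ∀ p ∈ T, p.2 ≤ 0) :
    ∑ p ∈ T, w ((0 : ℤ), (5 : ℤ)) p ≤ 1 := by
  have h1 : ∑ x ∈ T.subtype (fun q : ℤ × ℤ => q.2 ≤ 0), w ((0 : ℤ), (5 : ℤ)) (x : ℤ × ℤ)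
      = ∑ p ∈ T, w ((0 : ℤ), (5 : ℤ)) p :=
    Finset.sum_subtype_of_mem (fun q => w ((0 : ℤ), (5 : ℤ)) q) hT
  have h2 : ∑ x ∈ T.subtype (fun q : ℤ × ℤ => q.2 ≤ 0), w ((0 : ℤ), (5 : ℤ)) (x : ℤ × ℤ)
      ≤ ∑' p : {q : ℤ × ℤ // q.2 ≤ 0}, w ((0 : ℤ), (5 : ℤ)) (p : ℤ × ℤ) :=
    Summable.sum_le_tsum _ (fun i _ => w_nonneg _ _) summable_w
  rw [tsum_w] at h2
  linarith

lemma W_lt_one (S : Pos) (hS : ∀ p ∈ S, p.2 ≤ 0) : W ((0 : ℤ), (5 : ℤ)) S < 1 := by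
  obtain ⟨k, hk⟩ : ∃ k : ℕ, ((0 : ℤ), -(k : ℤ)) ∉ S := by
    by_contra hc
    push_neg at hc
    have hinj : Function.Injective (fun k : ℕ => ((0 : ℤ), -(k : ℤ))) := by
      intro a b hab
      have h2 : -(a : ℤ) = -(b : ℤ) := congrArg Prod.snd hab
      omega
    exact Set.not_infinite.mpr S.finite_toSet
      (Set.infinite_of_injective_forall_mem hinj fun k => hc k)
  set q : ℤ × ℤ := ((0 : ℤ), -(k : ℤ)) with hq
  have hqle : q.2 ≤ 0 := by simp [hq]
  have h1 : ∑ p ∈ insert q S, w ((0 : ℤ), (5 : ℤ)) p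
      = w ((0 : ℤ), (5 : ℤ)) q + W ((0 : ℤ), (5 : ℤ)) S := Finset.sum_insert hk
  have h2 : ∑ p ∈ insert q S, w ((0 : ℤ), (5 : ℤ)) p ≤ 1 := by
    apply finsum_le_one
    intro p hp
    rcases Finset.mem_insert.mp hp with rfl | hp
    · exact hqle
    · exact hS p hp
  have h3 : 0 < w ((0 : ℤ), (5 : ℤ)) q := pow_pos sigma_pos _
  linarith

/-- The total golden-ratio weight of the closed lower half-plane, relative to the
target (0,5), is exactly 1; hence any finite set of pegs in the half-plane has
weight < 1 and no sequence of jumps starting in the half-plane reaches (0,5). -/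
theorem solitaire_army_five :
    (∑' p : {q : ℤ × ℤ // q.2 ≤ 0}, w ((0 : ℤ), (5 : ℤ)) (p : ℤ × ℤ)) = 1 ∧
    (∀ S : Pos, (∀ p ∈ S, p.2 ≤ 0) → W ((0 : ℤ), (5 : ℤ)) S < 1) ∧
    (∀ (m : ℕ) (f : Fin (m + 1) → Pos),
      (∀ i : Fin m, IsJump (f i.castSucc) (f i.succ)) →
      (∀ p ∈ f 0, p.2 ≤ 0) → ((0 : ℤ), (5 : ℤ)) ∉ f (Fin.last m)) := by
  refine ⟨tsum_w, W_lt_one, ?_⟩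
  intro m f hjump h0 hmem
  set t : ℤ × ℤ := ((0 : ℤ), (5 : ℤ)) with ht
  have hstep : ∀ j : ℕ, ∀ hj : j < m + 1, W t (f ⟨j, hj⟩) ≤ W t (f 0) := by
    intro j
    induction j with
    | zero =>
      intro hj
      have e : (⟨0, hj⟩ : Fin (m + 1)) = 0 := by ext; simp
      rw [e]
    | succ n ih =>
      intro hj
      have hn : n < m := by omega
      have hJ := hjump ⟨n, hn⟩
      have e1 : (⟨n, hn⟩ : Fin m).castSucc = ⟨n, by omega⟩ := rfl
      have e2 : (⟨n, hn⟩ : Fin m).succ = ⟨n + 1, hj⟩ := rfl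
      rw [e1, e2] at hJ
      exact le_trans (jump_W t hJ) (ih (by omega))
  have hlast : W t (f (Fin.last m)) ≤ W t (f 0) := by
    have e : Fin.last m = (⟨m, by omega⟩ : Fin (m + 1)) := rfl
    rw [e]
    exact hstep m (by omega)
  have h1 : w t t ≤ W t (f (Fin.last m)) :=
    Finset.single_le_sum (fun p _ => w_nonneg t p) hmem
  have h2 : w t t = 1 := by simp [w]
  have h3 : W t (f 0) < 1 := W_lt_one _ h0
  linarith
end
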